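/- arXiv:2304.05145 — 4 statements merged into one kernel-verified Lean document; each statement's English description precedes it below -/
import Mathlib

section
/- Let n ≥ k ≥ 1 be integers and let S be a nonempty family of k-element subsets of [n] = {1,…,n}, and let a be the k-binomial decomposition of m = |S|. Then for each integer i with 1 ≤ i ≤ k−1, the i-fold iterated shadow satisfies |Δ^i(S)| ≥ B(a, k−i). -/
/-!
By the colex form of Kruskal–Katona (`Finset.iterated_kk`) it suffices to find a `k`-set `s`
whose colex initial segment has `|S|` members and whose `i`-fold shadow has `B(a, k - i)`
members. The initial segment of the set with elements `d₀ > ⋯ > d_{j-1}` has `1 + B(d, j)`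
members, and its shadow is the initial segment of the set with its minimum removed. So if
`a = a' ++ [c]`, let `s` have the elements `d = a' ++ [c - 1, …, c - r]`, `r = k - |a'|`: by the
hockey-stick identity `C(c, r) = 1 + Σ_{j<r} C(c - 1 - j, r - j)`, `1 + B(take q d, q) = B(a, q)`
for every `q ≤ k`.
-/

/-- Generalized binomial coefficient `C(n, j)`:
`C(n,j) = n(n-1)⋯(n-j+1)/j!` for `j ≥ 0` and `C(n,j) = 0` for `j < 0`. -/
def C (n j : ℤ) : ℤ :=
  if 0 ≤ j then
    if 0 ≤ n then ((n.toNat.choose j.toNat : ℕ) : ℤ)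
    else (-1) ^ j.toNat * (((j - n - 1).toNat.choose j.toNat : ℕ) : ℤ)
  else 0

/-- `B a k = Σ_l C(a_l, k - l)`. -/
def B : List ℤ → ℤ → ℤ
  | [], _ => 0
  | x :: xs, k => C x k + B xs (k - 1)

/-- `a` has the shape of a `k`-binomial decomposition: strictly decreasing,
length at most `k`, and `a_i ≥ k - i` for every index. -/
def IsKBinomSeq (k : ℕ) (a : List ℤ) : Prop :=
  a.Chain' (· > ·) ∧ a.length ≤ k ∧ ∀ i < a.length, (k : ℤ) - i ≤ a.getD i 0

/-- `a` is the `k`-binomial decomposition of `m`. -/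
def IsKBinom (k : ℕ) (m : ℤ) (a : List ℤ) : Prop :=
  IsKBinomSeq k a ∧ m = B a (k : ℤ)

/-- Non-strict lexicographic order on integer sequences. -/
def lexLE (x y : List ℤ) : Prop := x = y ∨ List.Lex (· < ·) x y

lemma C_of_neg {x j : ℤ} (hj : j < 0) : C x j = 0 := by simp [C, hj.not_ge]

lemma C_natCast (x j : ℕ) : C x j = x.choose j := by simp [C]

lemma C_zero (x : ℤ) : C x 0 = 1 := by
  by_cases hx : 0 ≤ x <;> simp [C, hx]

lemma C_nonneg {x : ℤ} (j : ℤ) (hx : 0 ≤ x) : 0 ≤ C x j := by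
  unfold C; split_ifs <;> positivity

lemma C_mono {x y : ℤ} (j : ℤ) (hx : 0 ≤ x) (hxy : x ≤ y) : C x j ≤ C y j := by
  rcases lt_or_ge j 0 with hj | hj
  · simp [C_of_neg hj]
  lift j to ℕ using hj
  lift y to ℕ using hx.trans hxy
  lift x to ℕ using hx
  simp only [C_natCast, Nat.cast_le] at hxy ⊢
  exact Nat.choose_le_choose j hxy

lemma C_pascal {x j : ℤ} (hx : 1 ≤ x) (hj : 1 ≤ j) :
    C x j = C (x - 1) (j - 1) + C (x - 1) j := by
  obtain ⟨p, rfl⟩ : ∃ p : ℕ, x = p + 1 := ⟨(x - 1).toNat, by omega⟩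
  obtain ⟨q, rfl⟩ : ∃ q : ℕ, j = q + 1 := ⟨(j - 1).toNat, by omega⟩
  have h := C_natCast (p + 1) (q + 1)
  rw [Nat.choose_succ_succ', Nat.cast_add (p.choose q), ← C_natCast, ← C_natCast] at h
  simpa using h

lemma B_of_neg : ∀ (z : List ℤ) {j : ℤ}, j < 0 → B z j = 0
  | [], _, _ => rfl
  | x :: z, j, hj => by rw [B, C_of_neg hj, B_of_neg z (by omega), add_zero]

lemma B_nonneg : ∀ {z : List ℤ} (j : ℤ), (∀ x ∈ z, 0 ≤ x) → 0 ≤ B z j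
  | [], _, _ => le_rfl
  | x :: z, j, h => by
    rw [B]
    have := B_nonneg (j - 1) fun y hy => h y (List.mem_cons_of_mem x hy)
    have := C_nonneg j (h x List.mem_cons_self)
    omega

def descRun : ℤ → ℕ → List ℤ
  | _, 0 => []
  | c, r + 1 => (c - 1) :: descRun (c - 1) r

@[simp] lemma length_descRun (c : ℤ) (r : ℕ) : (descRun c r).length = r := by
  induction r generalizing c <;> simp [descRun, *]

lemma take_descRun (c : ℤ) {q r : ℕ} (hqr : q ≤ r) : (descRun c r).take q = descRun c q := by
  induction r generalizing c q with
  | zero => simp_all [descRun]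
  | succ r ih => cases q <;> simp_all [descRun]

lemma mem_descRun {c x : ℤ} {r : ℕ} (hx : x ∈ descRun c r) : c - r ≤ x ∧ x < c := by
  induction r generalizing c with
  | zero => simp [descRun] at hx
  | succ r ih =>
    rcases List.mem_cons.1 hx with rfl | hx
    · omega
    · have := ih hx; omega

lemma pairwise_descRun (c : ℤ) (r : ℕ) : (descRun c r).Pairwise (· > ·) := by
  induction r generalizing c with
  | zero => simp [descRun]
  | succ r ih => exact List.pairwise_cons.2 ⟨fun x hx => (mem_descRun hx).2, ih _⟩

/-- The hockey-stick identity. -/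
lemma one_add_B_descRun : ∀ {c : ℤ} {r : ℕ}, (r : ℤ) ≤ c → 1 + B (descRun c r) r = C c r
  | c, 0, _ => by simp [descRun, B, C_zero]
  | c, r + 1, hc => by
    push_cast at hc ⊢
    rw [descRun, B, C_pascal (x := c) (by omega) (by omega), add_sub_cancel_right,
      ← one_add_B_descRun (c := c - 1) (r := r) (by omega)]
    ring

lemma B_concat_eq_one_add_B_take : ∀ (a' : List ℤ) {c : ℤ} {r : ℕ}, (r : ℤ) ≤ c →
    ∀ q ≤ a'.length + r, B (a' ++ [c]) q = 1 + B ((a' ++ descRun c r).take q) q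
  | [], c, r, hrc, q, hq => by
    simp only [List.nil_append, List.length_nil, zero_add] at hq ⊢
    rw [take_descRun c hq, one_add_B_descRun (by omega), B, B, add_zero]
  | x :: a', c, r, hrc, 0, _ => by simp [B, C_zero, B_of_neg]
  | x :: a', c, r, hrc, q + 1, hq => by
    rw [List.cons_append, List.cons_append, List.take_succ_cons, B, B, Nat.cast_succ,
      add_sub_cancel_right, B_concat_eq_one_add_B_take a' hrc q (by simp at hq; omega)]
    ring

open Finset
open scoped FinsetFamily

namespace Finset.Colex

variable {α : Type*} [LinearOrder α] {s t : Finset α} {m : α}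

lemma toColex_le_insert_iff_of_notMem (hs : ∀ x ∈ s, x < m) (hmt : m ∉ t) :
    toColex t ≤ toColex (insert m s) ↔ ∀ x ∈ t, x < m := by
  refine ⟨fun h x hx => ?_, fun h => ?_⟩
  · refine (forall_le_mono h (fun y hy => ?_) x hx).lt_of_ne (ne_of_mem_of_not_mem hx hmt)
    exact (mem_insert.1 hy).elim le_of_eq fun hy => (hs y hy).le
  · exact (toColex_lt_toColex_iff_exists_forall_lt.2
      ⟨m, mem_insert_self m s, hmt, fun x hx _ => h x hx⟩).le

lemma toColex_le_insert_iff_of_mem (hs : m ∉ s) (hmt : m ∈ t) :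
    toColex t ≤ toColex (insert m s) ↔ toColex (t.erase m) ≤ toColex s := by
  rw [← toColex_sdiff_le_toColex_sdiff (singleton_subset_iff.2 hmt)
    (singleton_subset_iff.2 (mem_insert_self m s)), sdiff_singleton_eq_erase,
    sdiff_singleton_eq_erase, erase_insert hs]

variable [Fintype α] [LocallyFiniteOrderBot α]

lemma initSeg_insert_of_forall_lt (hs : ∀ x ∈ s, x < m) :
    initSeg (insert m s) = powersetCard (#s + 1) (Iio m) ∪ (initSeg s).image (insert m) := by
  have hms : m ∉ s := fun h => (hs m h).false
  ext t
  rw [mem_union, mem_initSeg, card_insert_of_notMem hms, mem_powersetCard, mem_image]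
  by_cases hmt : m ∈ t
  · have hmu : ∀ u, toColex u ≤ toColex s → m ∉ u := fun u hu hmu =>
      (forall_lt_mono hu hs m hmu).false
    rw [toColex_le_insert_iff_of_mem hms hmt]
    simp_rw [mem_initSeg]
    constructor
    · rintro ⟨hcard, hle⟩
      refine .inr ⟨t.erase m, ⟨?_, hle⟩, insert_erase hmt⟩
      rw [card_erase_of_mem hmt]
      omega
    · rintro (⟨hsub, -⟩ | ⟨u, ⟨hcard, hle⟩, rfl⟩)
      · exact absurd (mem_Iio.1 (hsub hmt)) (lt_irrefl m)
      · rw [card_insert_of_notMem (hmu u hle), erase_insert (hmu u hle)]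
        exact ⟨by omega, hle⟩
  · rw [toColex_le_insert_iff_of_notMem hs hmt]
    have : ∀ u, insert m u ≠ t := fun u hu => hmt (hu ▸ mem_insert_self m u)
    simp only [subset_iff, mem_Iio, this]
    tauto

lemma card_initSeg_insert_of_forall_lt (hs : ∀ x ∈ s, x < m) :
    #(initSeg (insert m s)) = (#(Iio m)).choose (#s + 1) + #(initSeg s) := by
  have hm : ∀ u ∈ initSeg s, m ∉ u := fun u hu hmu =>
    (forall_lt_mono (mem_initSeg.1 hu).2 hs m hmu).false
  rw [initSeg_insert_of_forall_lt hs, card_union_of_disjoint, card_powersetCard,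
    card_image_of_injOn fun u hu v hv huv => by
      rw [← erase_insert (hm u hu), huv, erase_insert (hm v hv)]]
  refine disjoint_left.2 fun t ht ht' => ?_
  obtain ⟨u, -, rfl⟩ := mem_image.1 ht'
  exact (mem_Iio.1 ((mem_powersetCard.1 ht).1 (mem_insert_self m u))).false

end Finset.Colex

open Colex

section FinsetOfList

variable {n : ℕ}

/-- Entries of `d` outside `[0, n)` are ignored. -/
def finsetOfList (n : ℕ) (d : List ℤ) : Finset (Fin n) := {y | ((y : ℕ) : ℤ) ∈ d}

@[simp] lemma mem_finsetOfList {d : List ℤ} {y : Fin n} :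
    y ∈ finsetOfList n d ↔ ((y : ℕ) : ℤ) ∈ d := by
  simp [finsetOfList]

lemma finsetOfList_cons (y : Fin n) (d : List ℤ) :
    finsetOfList n (((y : ℕ) : ℤ) :: d) = insert y (finsetOfList n d) := by
  ext; simp [Fin.val_inj]

lemma finsetOfList_concat (y : Fin n) (d : List ℤ) :
    finsetOfList n (d ++ [((y : ℕ) : ℤ)]) = insert y (finsetOfList n d) := by
  ext; simp [Fin.val_inj, or_comm]

lemma exists_fin_val_eq {x : ℤ} (hx : 0 ≤ x ∧ x < n) : ∃ y : Fin n, ((y : ℕ) : ℤ) = x :=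
  ⟨⟨x.toNat, by omega⟩, by simp [hx.1]⟩

lemma card_finsetOfList : ∀ {d : List ℤ}, d.Nodup → (∀ x ∈ d, 0 ≤ x ∧ x < n) →
    #(finsetOfList n d) = d.length
  | [], _, _ => by simp [finsetOfList]
  | x :: d, hd, hdn => by
    obtain ⟨y, rfl⟩ := exists_fin_val_eq (hdn x List.mem_cons_self)
    rw [finsetOfList_cons, card_insert_of_notMem (by simpa using (List.nodup_cons.1 hd).1),
      card_finsetOfList hd.of_cons fun x hx => hdn x (List.mem_cons_of_mem _ hx), List.length_cons]

lemma card_initSeg_finsetOfList : ∀ {d : List ℤ}, d.Pairwise (· > ·) →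
    (∀ x ∈ d, 0 ≤ x ∧ x < n) → (#(initSeg (finsetOfList n d)) : ℤ) = 1 + B d d.length
  | [], _, _ => by
    have : initSeg (∅ : Finset (Fin n)) = {∅} := eq_singleton_iff_unique_mem.2
      ⟨mem_initSeg_self, fun t ht => card_eq_zero.1 (mem_initSeg.1 ht).1.symm⟩
    simp [finsetOfList, this, B]
  | x :: d, hd, hdn => by
    obtain ⟨y, rfl⟩ := exists_fin_val_eq (hdn x List.mem_cons_self)
    have hdn' : ∀ x ∈ d, 0 ≤ x ∧ x < n := fun x hx => hdn x (List.mem_cons_of_mem _ hx)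
    rw [finsetOfList_cons, card_initSeg_insert_of_forall_lt fun z hz => ?_, Fin.card_Iio,
      card_finsetOfList hd.of_cons.nodup hdn', Nat.cast_add,
      card_initSeg_finsetOfList hd.of_cons hdn', B, List.length_cons, ← C_natCast, Nat.cast_succ,
      add_sub_cancel_right]
    · ring
    · exact_mod_cast List.rel_of_pairwise_cons hd (mem_finsetOfList.1 hz)

lemma shadow_initSeg_finsetOfList_concat {d : List ℤ} (y : Fin n)
    (hy : ∀ x ∈ d, ((y : ℕ) : ℤ) < x) :
    ∂ (initSeg (finsetOfList n (d ++ [((y : ℕ) : ℤ)]))) = initSeg (finsetOfList n d) := by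
  have hmin : ∀ z ∈ finsetOfList n d, y < z := fun z hz => by
    exact_mod_cast hy _ (mem_finsetOfList.1 hz)
  rw [finsetOfList_concat, shadow_initSeg (insert_nonempty _ _)]
  congr
  rw [show (insert y (finsetOfList n d)).min' (insert_nonempty _ _) = y from
    le_antisymm (min'_le _ _ (mem_insert_self _ _)) (le_min' _ _ _ fun z hz =>
      (mem_insert.1 hz).elim ge_of_eq fun hz => (hmin z hz).le),
    erase_insert fun h => (hmin y h).false]

lemma iterate_shadow_initSeg_finsetOfList : ∀ (i : ℕ) {d : List ℤ}, d.Pairwise (· > ·) →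
    (∀ x ∈ d, 0 ≤ x ∧ x < n) → i ≤ d.length →
    ∂^[i] (initSeg (finsetOfList n d)) = initSeg (finsetOfList n (d.take (d.length - i)))
  | 0, d, _, _, _ => by simp
  | i + 1, d, hd, hdn, hi => by
    obtain ⟨d, x, rfl⟩ := (List.eq_nil_or_concat' d).resolve_left (by rintro rfl; simp at hi)
    obtain ⟨y, rfl⟩ := exists_fin_val_eq (hdn x (by simp))
    rw [List.pairwise_append] at hd
    rw [Function.iterate_succ_apply, shadow_initSeg_finsetOfList_concat y
      fun z hz => hd.2.2 z hz _ (List.mem_singleton_self _),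
      iterate_shadow_initSeg_finsetOfList i hd.1 (fun z hz => hdn z (by simp [hz]))
        (by simp only [List.length_append, List.length_singleton] at hi; omega)]
    simp only [List.length_append, List.length_singleton]
    rw [List.take_append_of_le_length (by omega), Nat.add_sub_add_right]

lemma card_iterate_shadow_initSeg_finsetOfList {i : ℕ} {d : List ℤ} (hd : d.Pairwise (· > ·))
    (hdn : ∀ x ∈ d, 0 ≤ x ∧ x < n) (hi : i ≤ d.length) :
    (#(∂^[i] (initSeg (finsetOfList n d))) : ℤ) =
      1 + B (d.take (d.length - i)) (d.length - i : ℕ) := by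
  rw [iterate_shadow_initSeg_finsetOfList i hd hdn hi, card_initSeg_finsetOfList
    (hd.sublist (List.take_sublist _ _)) fun x hx => hdn x (List.mem_of_mem_take hx),
    List.length_take_of_le (Nat.sub_le _ _)]

end FinsetOfList

lemma IsKBinomSeq.exists_B_eq_one_add_B_take {k : ℕ} {a' : List ℤ} {c : ℤ}
    (h : IsKBinomSeq k (a' ++ [c])) :
    ∃ d : List ℤ, d.length = k ∧ d.Pairwise (· > ·) ∧ (∀ x ∈ d, 0 ≤ x) ∧
      ∀ q ≤ k, B (a' ++ [c]) q = 1 + B (d.take q) q := by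
  obtain ⟨hchain, hlen, hlast⟩ := h
  obtain ⟨ha', -, hlt⟩ := List.pairwise_append.1 (List.isChain_iff_pairwise.1 hchain)
  have hc : (k : ℤ) - a'.length ≤ c := by simpa using hlast a'.length (by simp)
  rw [List.length_append, List.length_singleton] at hlen
  have hgt : ∀ x ∈ a', c < x := fun x hx => hlt x hx c List.mem_cons_self
  refine ⟨a' ++ descRun c (k - a'.length), by simp; omega, List.pairwise_append.2
    ⟨ha', pairwise_descRun _ _, fun x hx y hy => (mem_descRun hy).2.trans (hgt x hx)⟩,
    fun x hx => ?_, fun q hq => B_concat_eq_one_add_B_take a' (by omega) q (by omega)⟩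
  rcases List.mem_append.1 hx with hx | hx
  · have := hgt x hx; omega
  · have := (mem_descRun hx).1; omega

lemma lt_of_mem_of_one_add_B_le_choose {n k : ℕ} {d : List ℤ} (hd : d.Pairwise (· > ·))
    (hd0 : ∀ x ∈ d, 0 ≤ x) (h : 1 + B d k ≤ n.choose k) : ∀ x ∈ d, x < n := by
  obtain _ | ⟨y, d⟩ := d
  · simp
  have hy : y < n := by
    by_contra! hy
    have hC : (n.choose k : ℤ) ≤ C y k := C_natCast n k ▸ C_mono k (Nat.cast_nonneg n) hy
    have := B_nonneg (k - 1) fun x hx => hd0 x (List.mem_cons_of_mem y hx)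
    rw [B] at h
    omega
  intro x hx
  rcases List.mem_cons.1 hx with rfl | hx
  · exact hy
  · exact (List.rel_of_pairwise_cons hd hx).trans hy

lemma IsKBinom.exists_card_iterate_shadow_initSeg {n k : ℕ} {m : ℤ} {a : List ℤ}
    (ha : IsKBinom k m a) (hm : 0 < m) (hmn : m ≤ n.choose k) :
    ∃ s : Finset (Fin n), #s = k ∧
      ∀ i ≤ k, (#(∂^[i] (initSeg s)) : ℤ) = B a (k - i) := by
  obtain ⟨hseq, rfl⟩ := ha
  obtain ⟨a', c, rfl⟩ : ∃ a' c, a = a' ++ [c] :=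
    (List.eq_nil_or_concat' a).resolve_left fun h => by simp [h, B] at hm
  obtain ⟨d, hlen, hd, hd0, hB⟩ := hseq.exists_B_eq_one_add_B_take
  rw [hB k le_rfl, List.take_of_length_le hlen.le] at hmn
  have hdn : ∀ x ∈ d, 0 ≤ x ∧ x < n := fun x hx =>
    ⟨hd0 x hx, lt_of_mem_of_one_add_B_le_choose hd hd0 hmn x hx⟩
  refine ⟨finsetOfList n d, hlen ▸ card_finsetOfList hd.nodup hdn, fun i hi => ?_⟩
  rw [card_iterate_shadow_initSeg_finsetOfList hd hdn (hlen ▸ hi), hlen, ← hB _ (k.sub_le i),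
    Nat.cast_sub hi]

theorem kruskal_katona_iterated_shadow_general
    (n k : ℕ)
    (S : Finset (Finset (Fin n))) (hS : S.Nonempty) (hScard : ∀ X ∈ S, X.card = k)
    (a : List ℤ) (ha : IsKBinom k (S.card : ℤ) a)
    (i : ℕ) (hik : i ≤ k - 1) :
    B a ((k : ℤ) - i) ≤ ((Finset.shadow^[i] S).card : ℤ) := by
  have hSn : #S ≤ n.choose k := by simpa using Set.Sized.card_le hScard
  obtain ⟨s, hs, hshadow⟩ :=
    ha.exists_card_iterate_shadow_initSeg (by exact_mod_cast hS.card_pos) (by exact_mod_cast hSn)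
  have hcard : #(initSeg s) = #S := by
    have := hshadow 0 k.zero_le
    rw [Function.iterate_zero_apply, Nat.cast_zero, sub_zero, ← ha.2] at this
    exact_mod_cast this
  rw [← hshadow i (by omega)]
  exact_mod_cast iterated_kk hScard hcard.le (hs ▸ isInitSeg_initSeg)

/-- Kruskal–Katona: for a nonempty family `S` of `k`-subsets of `[n]` with
`k`-binomial decomposition `a` of `|S|`, for each `1 ≤ i ≤ k-1` the `i`-fold
iterated shadow satisfies `|Δ^i(S)| ≥ B(a, k-i)`. -/
theorem kruskal_katona_iterated_shadow
    (n k : ℕ) (hk : 1 ≤ k) (hkn : k ≤ n)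
    (S : Finset (Finset (Fin n))) (hS : S.Nonempty) (hScard : ∀ X ∈ S, X.card = k)
    (a : List ℤ) (ha : IsKBinom k (S.card : ℤ) a)
    (i : ℕ) (hi1 : 1 ≤ i) (hik : i ≤ k - 1) :
    B a ((k : ℤ) - i) ≤ ((Finset.shadow^[i] S).card : ℤ) :=
  kruskal_katona_iterated_shadow_general n k S hS hScard a ha i hik
end

section
/- Let n > k ≥ 1 be integers, let j be an integer with 0 ≤ j ≤ k−1, and let a_0 > a_1 > ⋯ > a_j be integers with k−i ≤ a_i ≤ n−i−1 for all 0 ≤ i ≤ j. Then, as rational numbers, (1 − k/n) · Σ_{i=0}^{j} C(a_i, k−i) ≥ Σ_{i=0}^{j} C(a_i − 1, k−i) + ((j+1)/n) · C(a_j − 1, k−j−1). -/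
lemma C_eq_choose (m : ℤ) (r : ℕ) (hm : 0 ≤ m) : C m (r : ℤ) = (m.toNat.choose r : ℤ) := by
  simp [C, hm]

/-- Telescoping inequality. -/
lemma tele (k : ℕ) (b : ℕ → ℕ) : ∀ j, j + 1 ≤ k → (∀ i < j, b (i+1) + 1 ≤ b i) →
    (∑ i ∈ Finset.range (j+1), i * (b i).choose (k - i)) + (j+1) * (b j - 1).choose (k - j - 1)
      ≤ ∑ i ∈ Finset.range (j+1), (i+1) * (b i - 1).choose (k - i - 1) := by
  intro j
  induction j with
  | zero => intro _ _; simp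
  | succ m ih =>
    intro hk hdec
    have ihh := ih (by omega) (fun i hi => hdec i (by omega))
    rw [Finset.sum_range_succ (fun i => (i+1) * (b i - 1).choose (k - i - 1)) (m+1),
        Finset.sum_range_succ (fun i => i * (b i).choose (k - i)) (m+1)]
    have hsub : k - (m+1) = k - m - 1 := by omega
    have mono : (b (m+1)).choose (k - (m+1)) ≤ (b m - 1).choose (k - m - 1) := by
      rw [hsub]; exact Nat.choose_le_choose _ (by have := hdec m (by omega); omega)
    have h1 : (m+1) * (b (m+1)).choose (k - (m+1)) ≤ (m+1) * (b m - 1).choose (k - m - 1) :=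
      Nat.mul_le_mul_left _ mono
    calc (∑ i ∈ Finset.range (m+1), i * (b i).choose (k - i))
          + (m+1) * (b (m+1)).choose (k - (m+1)) + (m+1+1) * (b (m+1) - 1).choose (k - (m+1) - 1)
        ≤ (∑ i ∈ Finset.range (m+1), i * (b i).choose (k - i))
          + (m+1) * (b m - 1).choose (k - m - 1) + (m+1+1) * (b (m+1) - 1).choose (k - (m+1) - 1) := by
          exact Nat.add_le_add_right (Nat.add_le_add_left h1 _) _
      _ ≤ (∑ i ∈ Finset.range (m+1), (i+1) * (b i - 1).choose (k - i - 1))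
          + (m+1+1) * (b (m+1) - 1).choose (k - (m+1) - 1) := Nat.add_le_add_right ihh _

/-- Key natural-number inequality. -/
lemma key (n k j : ℕ) (b : ℕ → ℕ) (hj : j + 1 ≤ k)
    (hdec : ∀ i < j, b (i+1) + 1 ≤ b i)
    (hlb : ∀ i ≤ j, k - i ≤ b i)
    (hub : ∀ i ≤ j, b i + i + 1 ≤ n) :
    k * (∑ i ∈ Finset.range (j+1), (b i).choose (k-i)) + (j+1) * (b j - 1).choose (k-j-1)
      ≤ n * ∑ i ∈ Finset.range (j+1), (b i - 1).choose (k - i - 1) := by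
  have per : ∀ i ∈ Finset.range (j+1),
      k * (b i).choose (k - i) + (i+1) * (b i - 1).choose (k-i-1)
        ≤ n * (b i - 1).choose (k-i-1) + i * (b i).choose (k - i) := by
    intro i hi
    have hi' : i ≤ j := by simpa [Nat.lt_succ_iff] using hi
    have hik : i + 1 ≤ k := by omega
    have hb1 : 1 ≤ b i := by have := hlb i hi'; omega
    have hid : b i * (b i - 1).choose (k - i - 1) = (b i).choose (k - i) * (k - i) := by
      have := Nat.add_one_mul_choose_eq (b i - 1) (k - i - 1)
      have e1 : b i - 1 + 1 = b i := by omega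
      have e2 : k - i - 1 + 1 = k - i := by omega
      rw [← e1, ← e2]
      simpa using this
    have hki : k - i + i = k := by omega
    have hn : b i + i + 1 ≤ n := hub i hi'
    -- k * ch = (k-i)*ch + i*ch = b i * ch' + i * ch
    have hkch : k * (b i).choose (k - i)
        = b i * (b i - 1).choose (k - i - 1) + i * (b i).choose (k - i) := by
      calc k * (b i).choose (k - i) = ((k - i) + i) * (b i).choose (k - i) := by
            rw [Nat.sub_add_cancel (by omega)]
        _ = (b i).choose (k - i) * (k - i) + i * (b i).choose (k - i) := by ring
        _ = b i * (b i - 1).choose (k - i - 1) + i * (b i).choose (k - i) := by rw [hid]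
    rw [hkch]
    have : (b i + i + 1) * (b i - 1).choose (k-i-1) ≤ n * (b i - 1).choose (k-i-1) :=
      Nat.mul_le_mul_right _ hn
    calc b i * (b i - 1).choose (k - i - 1) + i * (b i).choose (k - i)
          + (i+1) * (b i - 1).choose (k-i-1)
        = (b i + i + 1) * (b i - 1).choose (k-i-1) + i * (b i).choose (k - i) := by ring
      _ ≤ n * (b i - 1).choose (k-i-1) + i * (b i).choose (k - i) :=
          Nat.add_le_add_right this _
  have hsum := Finset.sum_le_sum per
  rw [Finset.sum_add_distrib, Finset.sum_add_distrib, ← Finset.mul_sum, ← Finset.mul_sum] at hsum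
  have htel := tele k b j hj hdec
  -- combine
  have h2 : k * (∑ i ∈ Finset.range (j+1), (b i).choose (k-i))
      + ((∑ i ∈ Finset.range (j+1), i * (b i).choose (k - i))
        + (j+1) * (b j - 1).choose (k-j-1))
      ≤ n * (∑ i ∈ Finset.range (j+1), (b i - 1).choose (k-i-1))
        + ∑ i ∈ Finset.range (j+1), i * (b i).choose (k - i) := by
    calc _ ≤ k * (∑ i ∈ Finset.range (j+1), (b i).choose (k-i))
            + ∑ i ∈ Finset.range (j+1), (i+1) * (b i - 1).choose (k - i - 1) :=
          Nat.add_le_add_left htel _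
      _ ≤ _ := hsum
  have e : k * (∑ i ∈ Finset.range (j+1), (b i).choose (k-i))
      + ((∑ i ∈ Finset.range (j+1), i * (b i).choose (k - i))
        + (j+1) * (b j - 1).choose (k-j-1))
      = (k * (∑ i ∈ Finset.range (j+1), (b i).choose (k-i))
        + (j+1) * (b j - 1).choose (k-j-1))
        + ∑ i ∈ Finset.range (j+1), i * (b i).choose (k - i) := by ring
  rw [e] at h2
  exact Nat.le_of_add_le_add_right h2

/-- The averaging inequality: for `a_0 > a_1 > ⋯ > a_j` with `k - i ≤ a_i ≤ n - i - 1`,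
`(1 - k/n) Σ C(a_i, k-i) ≥ Σ C(a_i - 1, k-i) + ((j+1)/n) C(a_j - 1, k-j-1)`. -/
theorem averaging_inequality
    (n k : ℕ) (hk : 1 ≤ k) (hkn : k < n)
    (j : ℕ) (hj : j ≤ k - 1)
    (a : ℕ → ℤ)
    (hdec : ∀ i < j, a (i + 1) < a i)
    (hlb : ∀ i ≤ j, (k : ℤ) - i ≤ a i)
    (hub : ∀ i ≤ j, a i ≤ (n : ℤ) - i - 1) :
    (∑ i ∈ Finset.range (j + 1), ((C (a i - 1) ((k : ℤ) - i) : ℤ) : ℚ))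
        + ((j + 1 : ℚ) / (n : ℚ)) * ((C (a j - 1) ((k : ℤ) - j - 1) : ℤ) : ℚ)
      ≤ (1 - (k : ℚ) / (n : ℚ)) *
          ∑ i ∈ Finset.range (j + 1), ((C (a i) ((k : ℤ) - i) : ℤ) : ℚ) := by
  set b : ℕ → ℕ := fun i => (a i).toNat with hb
  have hjk : j + 1 ≤ k := by omega
  have ha1 : ∀ i ≤ j, 1 ≤ a i := by
    intro i hi
    have h1 := hlb i hi
    have h2 : i + 1 ≤ k := by omega
    have h2' : (i : ℤ) + 1 ≤ (k : ℤ) := by exact_mod_cast h2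
    omega
  -- rewrite C terms as Nat.choose
  have hC1 : ∀ i ∈ Finset.range (j+1),
      ((C (a i) ((k : ℤ) - i) : ℤ) : ℚ) = ((b i).choose (k - i) : ℚ) := by
    intro i hi
    have hi' : i ≤ j := by simpa [Nat.lt_succ_iff] using hi
    have hik : i ≤ k := by omega
    have e : (k : ℤ) - i = ((k - i : ℕ) : ℤ) := by rw [Nat.cast_sub hik]
    rw [e, C_eq_choose _ _ (by have := ha1 i hi'; omega)]
    norm_num [hb]
  have hC2 : ∀ i ∈ Finset.range (j+1),
      ((C (a i - 1) ((k : ℤ) - i) : ℤ) : ℚ) = ((b i - 1).choose (k - i) : ℚ) := by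
    intro i hi
    have hi' : i ≤ j := by simpa [Nat.lt_succ_iff] using hi
    have hik : i ≤ k := by omega
    have e : (k : ℤ) - i = ((k - i : ℕ) : ℤ) := by rw [Nat.cast_sub hik]
    have ht : (a i - 1).toNat = b i - 1 := by
      have := ha1 i hi'; simp only [hb]; omega
    rw [e, C_eq_choose _ _ (by have := ha1 i hi'; omega), ht]
    norm_cast
  have hC3 : ((C (a j - 1) ((k : ℤ) - j - 1) : ℤ) : ℚ) = ((b j - 1).choose (k - j - 1) : ℚ) := by
    have e : (k : ℤ) - j - 1 = ((k - j - 1 : ℕ) : ℤ) := by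
      omega
    have ht : (a j - 1).toNat = b j - 1 := by
      have := ha1 j le_rfl; simp only [hb]; omega
    rw [e, C_eq_choose _ _ (by have := ha1 j le_rfl; omega), ht]
    norm_cast
  rw [Finset.sum_congr rfl hC1, Finset.sum_congr rfl hC2, hC3]
  -- nat-level facts
  have hblb : ∀ i ≤ j, k - i ≤ b i := by
    intro i hi
    have h1 := hlb i hi
    have : ((k - i : ℕ) : ℤ) ≤ a i := by rw [Nat.cast_sub (by omega)]; exact h1
    simp only [hb]; omega
  have hbub : ∀ i ≤ j, b i + i + 1 ≤ n := by
    intro i hi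
    have h1 := hub i hi
    have h2 := ha1 i hi
    have : (b i : ℤ) = a i := by simp [hb]; omega
    omega
  have hbdec : ∀ i < j, b (i+1) + 1 ≤ b i := by
    intro i hi
    have h1 := hdec i hi
    have h2 := ha1 i (by omega)
    have h3 := ha1 (i+1) (by omega)
    simp only [hb]; omega
  set A := ∑ i ∈ Finset.range (j+1), (b i).choose (k-i) with hA
  set B := ∑ i ∈ Finset.range (j+1), (b i - 1).choose (k-i) with hB
  set D := ∑ i ∈ Finset.range (j+1), (b i - 1).choose (k-i-1) with hD
  set E := (b j - 1).choose (k-j-1) with hE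
  have hkey : k * A + (j+1) * E ≤ n * D := key n k j b hjk hbdec hblb hbub
  have hpascal : A = B + D := by
    rw [hA, hB, hD, ← Finset.sum_add_distrib]
    refine Finset.sum_congr rfl ?_
    intro i hi
    have hi' : i ≤ j := by simpa [Nat.lt_succ_iff] using hi
    have hb1 : 1 ≤ b i := by have := hblb i hi'; omega
    have e1 : b i - 1 + 1 = b i := by omega
    have e2 : k - i - 1 + 1 = k - i := by omega
    have hp : (b i).choose (k - i)
        = (b i - 1).choose (k - i - 1) + (b i - 1).choose (k - i - 1 + 1) := by
      conv_lhs => rw [← e1, ← e2]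
      rw [Nat.choose_succ_succ]
    rw [hp, e2, Nat.add_comm]
  -- final: n*B + ((j+1)*E + k*A) ≤ n*A
  have hfin : n * B + ((j+1) * E + k * A) ≤ n * A := by
    have hnA : n * A = n * B + n * D := by rw [hpascal]; ring
    have h4 := Nat.add_le_add_left hkey (n * B)
    rw [hnA]
    calc n * B + ((j+1) * E + k * A) = n * B + (k * A + (j+1) * E) := by ring
      _ ≤ n * B + n * D := h4
  have hfinQ : (n : ℚ) * B + ((j+1) * E + k * A) ≤ (n : ℚ) * A := by exact_mod_cast hfin
  have hn0 : (0 : ℚ) < n := by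
    have : 0 < n := by omega
    exact_mod_cast this
  have hid : (B : ℚ) + ((j + 1 : ℚ) / n) * E - (1 - (k:ℚ)/n) * A
      = ((n : ℚ) * B + ((j+1) * E + k * A) - n * A) / n := by
    field_simp; ring
  have h3 : ((n : ℚ) * B + ((j+1) * E + k * A) - n * A) / n ≤ 0 :=
    div_nonpos_of_nonpos_of_nonneg (by linarith) hn0.le
  have hBQ : ∑ x ∈ Finset.range (j+1), (((b x - 1).choose (k - x) : ℕ) : ℚ) = (B : ℚ) := by
    rw [hB]; push_cast; ring
  have hAQ : ∑ x ∈ Finset.range (j+1), (((b x).choose (k - x) : ℕ) : ℚ) = (A : ℚ) := by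
    rw [hA]; push_cast; ring
  rw [hBQ, hAQ]
  linarith [hid, h3]
end

section
/- Let α : ℤ × ℤ → ℝ be a finitely supported function such that Σ_{(x,y) ∈ ℤ×ℤ} α(x,y) · C(x+r, y+s) = 0 for all integers r and s. Then α belongs to the ℝ-linear span of the Pascal relators p_{(x,y)} = 1_{(x,y)} − 1_{(x−1,y)} − 1_{(x−1,y−1)}, for (x,y) ∈ ℤ×ℤ, where 1_{(u,v)} denotes the indicator function of the point (u,v). -/
noncomputable abbrev Vspan : Submodule ℝ ((ℤ × ℤ) →₀ ℝ) :=
  Submodule.span ℝ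
    (Set.range fun q : ℤ × ℤ =>
      (Finsupp.single q (1 : ℝ)
        - Finsupp.single (q.1 - 1, q.2) (1 : ℝ)
        - Finsupp.single (q.1 - 1, q.2 - 1) (1 : ℝ)))

lemma relator_mem (a b : ℤ) :
    Finsupp.single (a, b) (1 : ℝ) - Finsupp.single (a - 1, b) (1 : ℝ)
      - Finsupp.single (a - 1, b - 1) (1 : ℝ) ∈ Vspan :=
  Submodule.subset_span ⟨(a, b), rfl⟩

lemma keyA (n : ℕ) (x y : ℤ) :
    Finsupp.single (x, y) (1 : ℝ)
      - ∑ j ∈ Finset.range (n + 1), ((n.choose j : ℝ)) • Finsupp.single (x - (n : ℤ), y - (j : ℤ)) (1 : ℝ)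
      ∈ Vspan := by
  induction n with
  | zero => simp
  | succ n ih =>
    have hsum :
        ∑ j ∈ Finset.range (n + 2), (((n+1).choose j : ℝ)) • Finsupp.single (x - (n:ℤ) - 1, y - (j:ℤ)) (1 : ℝ)
          = ∑ j ∈ Finset.range (n + 1), ((n.choose j : ℝ)) • Finsupp.single (x - (n:ℤ) - 1, y - (j:ℤ)) (1 : ℝ)
          + ∑ j ∈ Finset.range (n + 1), ((n.choose j : ℝ)) • Finsupp.single (x - (n:ℤ) - 1, y - (j:ℤ) - 1) (1 : ℝ) := by
      rw [Finset.sum_range_succ' _ (n + 1),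
        Finset.sum_range_succ'
          (fun j => ((n.choose j : ℝ)) • Finsupp.single (x - (n:ℤ) - 1, y - (j:ℤ)) (1 : ℝ)) n]
      have h2 : ∀ j : ℕ, (((n+1).choose (j+1) : ℝ)) = (n.choose j : ℝ) + (n.choose (j+1) : ℝ) := by
        intro j; rw [Nat.choose_succ_succ]; push_cast; ring
      push_cast
      simp only [h2, add_smul, Finset.sum_add_distrib, sub_sub]
      rw [Finset.sum_range_succ (fun j => ((n.choose (j+1) : ℝ)) • Finsupp.single (x - ((n:ℤ)+1), y - ((j:ℤ)+1)) (1 : ℝ)) n]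
      simp [Nat.choose_succ_self, sub_sub]
      abel
    have hgoal :
        Finsupp.single (x, y) (1 : ℝ)
          - ∑ j ∈ Finset.range (n + 1 + 1), (((n+1).choose j : ℝ)) • Finsupp.single (x - ((n+1 : ℕ) : ℤ), y - (j:ℤ)) (1 : ℝ)
          = (Finsupp.single (x, y) (1 : ℝ)
              - ∑ j ∈ Finset.range (n + 1), ((n.choose j : ℝ)) • Finsupp.single (x - (n:ℤ), y - (j:ℤ)) (1 : ℝ))
          + ∑ j ∈ Finset.range (n + 1), ((n.choose j : ℝ)) •
              (Finsupp.single (x - (n:ℤ), y - (j:ℤ)) (1 : ℝ)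
                - Finsupp.single (x - (n:ℤ) - 1, y - (j:ℤ)) (1 : ℝ)
                - Finsupp.single (x - (n:ℤ) - 1, y - (j:ℤ) - 1) (1 : ℝ)) := by
      have hc : ((n + 1 : ℕ) : ℤ) = (n : ℤ) + 1 := by push_cast; ring
      simp only [hc, smul_sub, Finset.sum_sub_distrib, show x - ((n:ℤ)+1) = x - (n:ℤ) - 1 by ring]
      rw [hsum]
      abel
    rw [hgoal]
    exact Submodule.add_mem _ ih
      (Submodule.sum_mem _ fun j _ => Submodule.smul_mem _ _ (relator_mem _ _))
lemma keyB (n : ℕ) (y t : ℤ) :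
    ∑ j ∈ Finset.range (n + 1), ((n.choose j : ℝ)) * (if y - (j : ℤ) = t then (1:ℝ) else 0)
      = ((C (n : ℤ) (y - t) : ℤ) : ℝ) := by
  rcases le_or_gt 0 (y - t) with hd | hd
  · have hcong : ∀ j ∈ Finset.range (n + 1),
        ((n.choose j : ℝ)) * (if y - (j : ℤ) = t then (1:ℝ) else 0)
          = if j = (y - t).toNat then (n.choose j : ℝ) else 0 := by
      intro j _
      by_cases hj : y - (j : ℤ) = t
      · rw [if_pos hj, if_pos (by omega), mul_one]
      · rw [if_neg hj, if_neg (by omega), mul_zero]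
    rw [Finset.sum_congr rfl hcong,
      Finset.sum_ite_eq' (Finset.range (n + 1)) ((y - t).toNat) (fun j => (n.choose j : ℝ))]
    unfold C
    rw [if_pos hd, if_pos (by positivity : (0:ℤ) ≤ (n:ℤ))]
    by_cases hle : (y - t).toNat ∈ Finset.range (n + 1)
    · rw [if_pos hle]; norm_num
    · rw [if_neg hle]
      have : n.choose (y - t).toNat = 0 := Nat.choose_eq_zero_of_lt (by simp at hle; omega)
      simp [this]
  · have : ∀ j ∈ Finset.range (n + 1), ((n.choose j : ℝ)) * (if y - (j:ℤ) = t then (1:ℝ) else 0) = 0 := by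
      intro j _; rw [if_neg (by omega), mul_zero]
    rw [Finset.sum_congr rfl this]
    unfold C
    rw [if_neg (by omega)]
    simp

/-- Translation-invariant characterization: a finitely supported real combination of
binomial coefficients that vanishes under all translations lies in the span of the
Pascal relators. -/
theorem translation_invariant_characterization
    (α : (ℤ × ℤ) →₀ ℝ)
    (h : ∀ r s : ℤ, (α.sum fun p v => v * ((C (p.1 + r) (p.2 + s) : ℤ) : ℝ)) = 0) :
    α ∈ Submodule.span ℝ
        (Set.range fun q : ℤ × ℤ =>
          (Finsupp.single q (1 : ℝ)
            - Finsupp.single (q.1 - 1, q.2) (1 : ℝ)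
            - Finsupp.single (q.1 - 1, q.2 - 1) (1 : ℝ))) := by
  classical
  obtain ⟨m, hm⟩ : ∃ m : ℤ, ∀ p ∈ α.support, m ≤ p.1 := by
    obtain ⟨b, hb⟩ := (α.support.image fun p : ℤ × ℤ => -p.1).exists_le
    exact ⟨-b, fun p hp => by
      have := hb _ (Finset.mem_image_of_mem _ hp); omega⟩
  set nn : ℤ × ℤ → ℕ := fun p => (p.1 - m).toNat with hnn
  set red : (ℤ × ℤ) →₀ ℝ :=
    ∑ p ∈ α.support, (α p) •
      ∑ j ∈ Finset.range (nn p + 1), (((nn p).choose j : ℝ)) •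
        Finsupp.single (m, p.2 - (j : ℤ)) (1 : ℝ) with hred
  have hnncast : ∀ p ∈ α.support, ((nn p : ℤ)) = p.1 - m := by
    intro p hp
    simp only [hnn]
    exact Int.toNat_of_nonneg (by have := hm p hp; omega)
  -- red = 0
  have hred0 : red = 0 := by
    ext q
    obtain ⟨a, b⟩ := q
    rw [hred]
    simp only [Finsupp.coe_zero, Pi.zero_apply, Finsupp.finset_sum_apply, Finsupp.smul_apply,
      Finsupp.single_apply, smul_eq_mul]
    by_cases ha : m = a
    · subst ha
      have hsum : ∀ p ∈ α.support,
          (α p) * (∑ j ∈ Finset.range (nn p + 1), ((nn p).choose j : ℝ) *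
              (if (m, p.2 - (j:ℤ)) = (m, b) then (1:ℝ) else 0))
            = (α p) * ((C (p.1 + -m) (p.2 + -b) : ℤ) : ℝ) := by
        intro p hp
        congr 1
        have : ∀ j : ℕ, ((m, p.2 - (j:ℤ)) = (m, b)) ↔ (p.2 - (j:ℤ) = b) := by
          intro j; simp
        simp only [this]
        rw [keyB (nn p) p.2 b, show ((nn p : ℤ)) = p.1 + -m by rw [hnncast p hp]; ring,
          show p.2 - b = p.2 + -b by ring]
      rw [Finset.sum_congr rfl hsum]
      exact h (-m) (-b)
    · have : ∀ p ∈ α.support,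
          (α p) * (∑ j ∈ Finset.range (nn p + 1), ((nn p).choose j : ℝ) *
              (if (m, p.2 - (j:ℤ)) = (a, b) then (1:ℝ) else 0)) = 0 := by
        intro p _
        have : ∀ j ∈ Finset.range (nn p + 1),
            ((nn p).choose j : ℝ) * (if (m, p.2 - (j:ℤ)) = (a, b) then (1:ℝ) else 0) = 0 := by
          intro j _
          rw [if_neg (by simp [Prod.ext_iff]; intro hma; exact absurd hma ha), mul_zero]
        rw [Finset.sum_congr rfl this, Finset.sum_const_zero, mul_zero]
      rw [Finset.sum_congr rfl this, Finset.sum_const_zero]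
  -- α - red ∈ span
  have hmem : α - red ∈ Vspan := by
    have hα : α = ∑ p ∈ α.support, Finsupp.single p (α p) := by
      conv_lhs => rw [← Finsupp.sum_single α]
      rfl
    rw [hred]
    nth_rewrite 1 [hα]
    rw [← Finset.sum_sub_distrib]
    refine Submodule.sum_mem _ fun p hp => ?_
    have h1 : Finsupp.single p (α p) = (α p) • Finsupp.single p (1:ℝ) := by
      rw [Finsupp.smul_single, smul_eq_mul, mul_one]
    rw [h1, ← smul_sub]
    refine Submodule.smul_mem _ _ ?_
    have h2 := keyA (nn p) p.1 p.2
    have h3 : p.1 - ((nn p : ℤ)) = m := by rw [hnncast p hp]; ring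
    rw [h3] at h2
    simpa using h2
  have := hmem
  rw [hred0, sub_zero] at this
  exact this
end

section
/- Let n ≥ k ≥ 1 and 0 < m ≤ C(n,k), and let a be the k-binomial decomposition of m. Then the colex initial segment I_{n,k}(m) is extremal: |Δ(I_{n,k}(m))| = B(a, k−1). -/
/-- A family `T` of `j`-element sets is extremal if `|Δ(T)| = B(d, j-1)`
where `d` is the `j`-binomial decomposition of `|T|`. -/
def IsExtremal {α : Type} [DecidableEq α] (j : ℕ) (T : Finset (Finset α)) : Prop :=
  ∃ d : List ℤ, IsKBinom j (T.card : ℤ) d ∧ ((Finset.shadow T).card : ℤ) = B d ((j : ℤ) - 1)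

/-- Colex order: `X ≤ Y` iff `X = Y` or the maximum of the symmetric difference lies in `Y`. -/
def colexLE {α : Type} [LinearOrder α] [DecidableEq α] (X Y : Finset α) : Prop :=
  X = Y ∨ ∃ a ∈ Y \ X, ∀ b ∈ (X \ Y) ∪ (Y \ X), b ≤ a

/-- The family of the `m` smallest `k`-element subsets of `Fin n` in colex order. -/
noncomputable def colexInit (n k m : ℕ) : Finset (Finset (Fin n)) :=
  @Finset.filter _
    (fun X => (@Finset.filter _ (fun Y => colexLE Y X) (Classical.decPred _)
        (Finset.powersetCard k (Finset.univ : Finset (Fin n)))).card ≤ m)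
    (Classical.decPred _) (Finset.powersetCard k (Finset.univ : Finset (Fin n)))

open Finset Finset.Colex

lemma colexLE_iff_toColex_le {α : Type} [LinearOrder α] [DecidableEq α] {X Y : Finset α} :
    colexLE X Y ↔ toColex X ≤ toColex Y := by
  constructor
  · rintro (rfl | ⟨a, ha, hmax⟩)
    · exact le_rfl
    rw [mem_sdiff] at ha
    exact toColex_le_toColex.2 fun b hbX hbY ↦ ⟨a, ha.1, ha.2, hmax b (by simp [hbX, hbY])⟩
  · intro h
    rcases eq_or_ne X Y with rfl | hne
    · exact Or.inl rfl
    have hD : ((X \ Y) ∪ (Y \ X)).Nonempty := by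
      rw [nonempty_iff_ne_empty, Ne, union_eq_empty, sdiff_eq_empty_iff_subset,
        sdiff_eq_empty_iff_subset]
      exact fun hsub ↦ hne (hsub.1.antisymm hsub.2)
    set μ := ((X \ Y) ∪ (Y \ X)).max' hD
    refine Or.inr ⟨μ, ?_, fun b hb ↦ le_max' _ b hb⟩
    rcases mem_union.1 (max'_mem _ hD) with hXY | hYX
    · obtain ⟨b, hbY, hbX, hμb⟩ := toColex_le_toColex.1 h (mem_sdiff.1 hXY).1 (mem_sdiff.1 hXY).2
      have hbμ : b ≤ μ := le_max' _ b (mem_union_right _ (mem_sdiff.2 ⟨hbY, hbX⟩))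
      exact absurd (hμb.antisymm hbμ ▸ hbY) (mem_sdiff.1 hXY).2
    · exact hYX

section Colex
variable {α : Type*} [LinearOrder α] [Fintype α]

lemma card_initSeg_le_card_initSeg_iff {s t : Finset α} (hst : #t = #s) :
    #(initSeg t) ≤ #(initSeg s) ↔ toColex t ≤ toColex s := by
  have hsub {u v : Finset α} (huv : #u = #v) (h : toColex u ≤ toColex v) :
      initSeg u ⊆ initSeg v := fun w hw ↦ by
    rw [mem_initSeg] at hw ⊢
    exact ⟨huv ▸ hw.1, hw.2.trans h⟩
  refine ⟨fun h ↦ ?_, fun h ↦ card_le_card (hsub hst h)⟩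
  by_contra hlt
  rw [not_le] at hlt
  have hss : initSeg s ⊂ initSeg t := (hsub hst.symm hlt.le).ssubset_of_ne
    fun heq ↦ hlt.not_ge (mem_initSeg.1 (heq ▸ mem_initSeg_self)).2
  exact (card_lt_card hss).not_ge h

lemma initSeg_eq_powersetCard {s u : Finset α} (hsu : s ⊆ u) (hu : IsLowerSet (u : Set α))
    (htop : ∀ a ∈ u, a ∉ s → ∀ b ∈ s, a ≤ b) :
    initSeg s = powersetCard #s u := by
  ext t
  rw [mem_initSeg, mem_powersetCard, toColex_le_toColex]
  constructor
  · rintro ⟨hcard, hle⟩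
    refine ⟨fun a ha ↦ ?_, hcard.symm⟩
    by_cases has : a ∈ s
    · exact hsu has
    obtain ⟨b, hbs, -, hab⟩ := hle ha has
    exact hu hab (hsu hbs)
  · rintro ⟨htu, hcard⟩
    refine ⟨hcard.symm, fun a hat has ↦ ?_⟩
    obtain ⟨b, hb⟩ : (s \ t).Nonempty := by
      rw [nonempty_iff_ne_empty, Ne, sdiff_eq_empty_iff_subset]
      exact fun hst ↦ has (eq_of_subset_of_card_le hst hcard.le ▸ hat)
    obtain ⟨hbs, hbt⟩ := mem_sdiff.1 hb
    exact ⟨b, hbs, hbt, htop a (htu hat) has b hbs⟩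

variable [LocallyFiniteOrderBot α]

lemma card_initSeg_insert {s : Finset α} {x : α} (hs : ∀ y ∈ s, y < x) :
    #(initSeg (insert x s)) = (#(Iio x)).choose (#s + 1) + #(initSeg s) := by
  have hxs : x ∉ s := fun h ↦ (hs x h).false
  have hmax : ∀ y ∈ insert x s, y ≤ x := by
    simpa using fun y hy ↦ (hs y hy).le
  have hwithout : {t ∈ initSeg (insert x s) | x ∉ t} = powersetCard (#s + 1) (Iio x) := by
    ext t
    simp only [mem_filter, mem_initSeg, mem_powersetCard, card_insert_of_notMem hxs]
    constructor
    · rintro ⟨⟨hcard, hle⟩, hxt⟩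
      refine ⟨fun y hy ↦ mem_Iio.2 ((forall_le_mono hle hmax y hy).lt_of_ne ?_), hcard.symm⟩
      rintro rfl
      exact hxt hy
    · rintro ⟨htx, hcard⟩
      have hxt : x ∉ t := fun h ↦ (mem_Iio.1 (htx h)).false
      refine ⟨⟨hcard.symm, toColex_le_toColex.2 fun y hy _ ↦ ?_⟩, hxt⟩
      exact ⟨x, mem_insert_self x s, hxt, (mem_Iio.1 (htx hy)).le⟩
  have hxt {t : Finset α} (ht : t ∈ initSeg s) : x ∉ t :=
    fun h ↦ (forall_lt_mono (mem_initSeg.1 ht).2 hs x h).false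
  have hle {t : Finset α} (hx : x ∈ t) :
      toColex (t.erase x) ≤ toColex s ↔ toColex t ≤ toColex (insert x s) := by
    rw [← toColex_sdiff_le_toColex_sdiff (singleton_subset_iff.2 hx)
      (singleton_subset_iff.2 (mem_insert_self x s)), ← erase_eq, ← erase_eq, erase_insert hxs]
  have hwith : #{t ∈ initSeg (insert x s) | x ∈ t} = #(initSeg s) := by
    refine card_nbij' (·.erase x) (insert x) (fun t ht ↦ ?_) (fun t ht ↦ ?_)
      (fun t ht ↦ insert_erase (mem_filter.1 ht).2) (fun t ht ↦ erase_insert (hxt ht))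
    · obtain ⟨ht, hx⟩ := mem_filter.1 ht
      rw [mem_initSeg, card_insert_of_notMem hxs] at ht
      rw [mem_coe, mem_initSeg, card_erase_of_mem hx, hle hx]
      exact ⟨by omega, ht.2⟩
    · have hx := hxt ht
      rw [mem_coe, mem_initSeg] at ht
      rw [mem_coe, mem_filter, mem_initSeg, card_insert_of_notMem hxs,
        card_insert_of_notMem hx, ← hle (mem_insert_self x t), erase_insert hx]
      exact ⟨⟨by omega, ht.2⟩, mem_insert_self x t⟩
  rw [← card_filter_add_card_filter_not (fun t ↦ x ∈ t), hwith, hwithout, card_powersetCard,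
    add_comm]

end Colex

section ColexInit
variable {n : ℕ}

lemma filter_colexLE_eq_initSeg {k : ℕ} {X : Finset (Fin n)} (hX : #X = k) :
    @filter _ (fun Y ↦ colexLE Y X) (Classical.decPred _) (powersetCard k univ) = initSeg X := by
  ext Y
  rw [@mem_filter _ _ (Classical.decPred _), mem_powersetCard_univ, mem_initSeg,
    colexLE_iff_toColex_le, hX, eq_comm]

lemma colexInit_eq_initSeg {m : ℕ} {s : Finset (Fin n)} (hs : #(initSeg s) = m) :
    colexInit n #s m = initSeg s := by
  ext X
  rw [colexInit, @mem_filter _ _ (Classical.decPred _), mem_powersetCard_univ, mem_initSeg]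
  constructor
  · rintro ⟨hX, hle⟩
    rw [filter_colexLE_eq_initSeg hX, ← hs, card_initSeg_le_card_initSeg_iff hX] at hle
    exact ⟨hX.symm, hle⟩
  · rintro ⟨hX, hle⟩
    rw [filter_colexLE_eq_initSeg hX.symm, ← hs, card_initSeg_le_card_initSeg_iff hX.symm]
    exact ⟨hX.symm, hle⟩

lemma colexInit_zero (k : ℕ) : colexInit n k 0 = ∅ := by
  refine eq_empty_of_forall_notMem fun X hX ↦ ?_
  rw [colexInit, @mem_filter _ _ (Classical.decPred _), mem_powersetCard_univ] at hX
  rw [filter_colexLE_eq_initSeg hX.1, Nat.le_zero, card_eq_zero] at hX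
  exact (initSeg_nonempty (s := X)).ne_empty hX.2

end ColexInit

lemma C_eq_choose_s19 {x j : ℤ} (hx : 0 ≤ x) (hj : 0 ≤ j) : C x j = x.toNat.choose j.toNat := by
  simp [C, hx, hj]

section Cascade
variable {n : ℕ}

/-- For `a = (a₀ > ⋯ > a_t)` this is `{a₀, …, a_{t-1}} ∪ [a_t - (j - t), a_t)`, the `B a j`-th
`j`-subset of `Fin n` in colex order. -/
def cascadeSet (n : ℕ) : List ℤ → ℤ → Finset (Fin n)
  | [], _ => ∅
  | [x], j => {i : Fin n | x - j ≤ (i : ℕ) ∧ ((i : ℕ) : ℤ) < x}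
  | x :: y :: ys, j =>
    ({i : Fin n | ((i : ℕ) : ℤ) = x} : Finset (Fin n)) ∪ cascadeSet n (y :: ys) (j - 1)

/-- The conditions under which `cascadeSet n a j` is a `j`-set of the shape described above. -/
def IsCascade (n : ℕ) : List ℤ → ℤ → Prop
  | [], _ => False
  | [x], j => 0 ≤ j ∧ j ≤ x ∧ x ≤ n
  | x :: y :: ys, j => y < x ∧ x < n ∧ IsCascade n (y :: ys) (j - 1)

lemma cascadeSet_singleton_eq_sdiff {x j : ℤ} :
    cascadeSet n [x] j =
      ({i : Fin n | (i : ℕ) < x.toNat} : Finset (Fin n)) \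
        ({i : Fin n | (i : ℕ) < (x - j).toNat} : Finset (Fin n)) := by
  ext i
  simp only [cascadeSet, mem_sdiff, mem_filter, mem_univ, true_and]
  omega

lemma card_cascadeSet_singleton {x j : ℤ} (hj : 0 ≤ j) (hjx : j ≤ x) (hxn : x ≤ n) :
    (#(cascadeSet n [x] j) : ℤ) = j := by
  rw [cascadeSet_singleton_eq_sdiff, card_sdiff_of_subset, Fin.card_filter_val_lt,
    Fin.card_filter_val_lt]
  · omega
  · intro i
    simp only [mem_filter, mem_univ, true_and]
    omega

lemma card_initSeg_cascadeSet_singleton {x j : ℤ} (hj : 0 ≤ j) (hjx : j ≤ x) (hxn : x ≤ n) :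
    (#(initSeg (cascadeSet n [x] j)) : ℤ) = C x j := by
  have hcard := card_cascadeSet_singleton hj hjx hxn
  rw [initSeg_eq_powersetCard (u := {i : Fin n | (i : ℕ) < x.toNat}), card_powersetCard,
    Fin.card_filter_val_lt, C_eq_choose_s19 (hj.trans hjx) hj, show #(cascadeSet n [x] j) = j.toNat by
    omega, min_eq_right (by omega)]
  · intro i
    simp only [cascadeSet, mem_filter, mem_univ, true_and]
    omega
  · intro a b hba ha
    simp only [coe_filter, mem_univ, true_and, Set.mem_ofPred_eq] at ha ⊢
    exact (Fin.le_def.1 hba).trans_lt ha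
  · simp only [cascadeSet, mem_filter, mem_univ, true_and, not_and, not_lt, Fin.le_def]
    omega

lemma cascadeSet_cons_cons {x y : ℤ} {ys : List ℤ} {j : ℤ} (hx : 0 ≤ x) (hxn : x < n) :
    cascadeSet n (x :: y :: ys) j =
      insert ⟨x.toNat, by omega⟩ (cascadeSet n (y :: ys) (j - 1)) := by
  ext i
  simp only [cascadeSet, mem_union, mem_filter, mem_univ, true_and, mem_insert, Fin.ext_iff]
  rw [show ((i : ℕ) : ℤ) = x ↔ (i : ℕ) = x.toNat by omega]

namespace IsCascade

lemma head_nonneg : ∀ {x : ℤ} {xs : List ℤ} {j : ℤ}, IsCascade n (x :: xs) j → 0 ≤ x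
  | _, [], _, h => h.1.trans h.2.1
  | _, _ :: _, _, ⟨hyx, _, h⟩ => (head_nonneg h).trans hyx.le

lemma le_head : ∀ {x : ℤ} {xs : List ℤ} {j : ℤ}, IsCascade n (x :: xs) j →
    ∀ i ∈ cascadeSet n (x :: xs) j, ((i : ℕ) : ℤ) ≤ x
  | _, [], _, _, i, hi => by
    simp only [cascadeSet, mem_filter, mem_univ, true_and] at hi
    exact hi.2.le
  | _, _ :: _, _, ⟨hyx, hxn, h⟩, i, hi => by
    rw [cascadeSet_cons_cons ((head_nonneg h).trans hyx.le) hxn, mem_insert] at hi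
    rcases hi with rfl | hi
    · simpa using (head_nonneg h).trans hyx.le
    · exact (le_head h i hi).trans hyx.le

lemma card : ∀ {a : List ℤ} {j : ℤ}, IsCascade n a j → (#(cascadeSet n a j) : ℤ) = j
  | [_], _, h => card_cascadeSet_singleton h.1 h.2.1 h.2.2
  | _ :: _ :: _, _, ⟨hyx, hxn, h⟩ => by
    have hx := (head_nonneg h).trans hyx.le
    rw [cascadeSet_cons_cons hx hxn, card_insert_of_notMem fun hmem ↦ ?_]
    · push_cast
      rw [card h]
      ring
    · have := le_head h _ hmem
      dsimp only at this
      omega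

lemma card_initSeg : ∀ {a : List ℤ} {j : ℤ}, IsCascade n a j →
    (#(initSeg (cascadeSet n a j)) : ℤ) = B a j
  | [_], _, h => by
    rw [card_initSeg_cascadeSet_singleton h.1 h.2.1 h.2.2, B, B, add_zero]
  | x :: y :: ys, j, ⟨hyx, hxn, h⟩ => by
    have hx := (head_nonneg h).trans hyx.le
    have hR := card h
    have hsucc : #(cascadeSet n (y :: ys) (j - 1)) + 1 = j.toNat := by omega
    rw [cascadeSet_cons_cons hx hxn, card_initSeg_insert fun i hi ↦ ?_, Fin.card_Iio, hsucc, B,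
      C_eq_choose_s19 hx (by omega), ← card_initSeg h]
    · push_cast
      rfl
    · have := le_head h i hi
      rw [Fin.lt_def]
      dsimp only
      omega

lemma sub_one : ∀ {a : List ℤ} {j : ℤ}, IsCascade n a j → (a.length : ℤ) ≤ j →
    IsCascade n a (j - 1)
  | [_], _, ⟨hj, hjx, hxn⟩, hlen => by
    simp only [List.length_singleton, Nat.cast_one] at hlen
    exact ⟨by omega, by omega, hxn⟩
  | _ :: _ :: _, _, ⟨hyx, hxn, h⟩, hlen => by
    refine ⟨hyx, hxn, sub_one h ?_⟩
    simp only [List.length_cons, Nat.cast_add, Nat.cast_one] at hlen ⊢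
    omega

lemma erase_min' : ∀ {a : List ℤ} {j : ℤ}, IsCascade n a j → IsCascade n a (j - 1) →
    (hne : (cascadeSet n a j).Nonempty) →
    (cascadeSet n a j).erase ((cascadeSet n a j).min' hne) = cascadeSet n a (j - 1)
  | [x], j, ⟨hj, hjx, hxn⟩, _, hne => by
    have hj1 : 1 ≤ j := by
      have := card_cascadeSet_singleton hj hjx hxn
      have := card_pos.2 hne
      omega
    have hmin : (cascadeSet n [x] j).min' hne = ⟨(x - j).toNat, by omega⟩ := by
      rw [min'_eq_iff]
      simp only [cascadeSet, mem_filter, mem_univ, true_and, Fin.le_def]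
      exact ⟨by omega, fun b hb ↦ by omega⟩
    rw [hmin]
    ext i
    simp only [cascadeSet, mem_erase, mem_filter, mem_univ, true_and, ne_eq, Fin.ext_iff]
    omega
  | x :: y :: ys, j, ⟨hyx, hxn, h⟩, ⟨_, _, h'⟩, hne => by
    have hx := (head_nonneg h).trans hyx.le
    have hRne : (cascadeSet n (y :: ys) (j - 1)).Nonempty := by
      rw [← card_pos]
      have := card h
      have := card h'
      omega
    have hmin_le := le_head h _ (min'_mem _ hRne)
    have hmin : (cascadeSet n (x :: y :: ys) j).min' hne =
        (cascadeSet n (y :: ys) (j - 1)).min' hRne := by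
      rw [min'_eq_iff, cascadeSet_cons_cons hx hxn]
      refine ⟨mem_insert_of_mem (min'_mem _ _), fun b hb ↦ ?_⟩
      rcases mem_insert.1 hb with rfl | hb
      · rw [Fin.le_def]
        dsimp only
        omega
      · exact min'_le _ _ hb
    rw [hmin, cascadeSet_cons_cons hx hxn, cascadeSet_cons_cons hx hxn,
      erase_insert_of_ne fun heq ↦ ?_, erase_min' h h' hRne]
    rw [← heq] at hmin_le
    dsimp only at hmin_le
    omega

end IsCascade
end Cascade

lemma one_le_C {x j : ℤ} (hj : 0 ≤ j) (hjx : j ≤ x) : 1 ≤ C x j := by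
  rw [C_eq_choose_s19 (hj.trans hjx) hj]
  exact_mod_cast Nat.choose_pos (Int.toNat_le_toNat hjx)

lemma Nat.choose_lt_choose_of_lt {n a k : ℕ} (hk : 0 < k) (hka : k ≤ a) (hna : n < a) :
    n.choose k < a.choose k := by
  obtain ⟨a, rfl⟩ : ∃ a', a = a' + 1 := ⟨a - 1, by omega⟩
  obtain ⟨k, rfl⟩ : ∃ k', k = k' + 1 := ⟨k - 1, by omega⟩
  rw [Nat.choose_succ_succ']
  have := Nat.choose_pos (Nat.le_of_succ_le_succ hka)
  have := Nat.choose_le_choose (k + 1) (Nat.le_of_lt_succ hna)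
  omega

namespace IsKBinomSeq
variable {k : ℕ} {x : ℤ} {xs : List ℤ}

lemma one_le (h : IsKBinomSeq k (x :: xs)) : 1 ≤ k := by
  have := h.2.1
  simp only [List.length_cons] at this
  omega

lemma le_head (h : IsKBinomSeq k (x :: xs)) : (k : ℤ) ≤ x := by
  simpa using h.2.2 0 (by simp)

lemma tail (h : IsKBinomSeq k (x :: xs)) : IsKBinomSeq (k - 1) xs := by
  obtain ⟨hchain, hlen, hentry⟩ := h
  simp only [List.length_cons] at hlen
  refine ⟨hchain.tail, by omega, fun i hi ↦ ?_⟩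
  have := hentry (i + 1) (by simpa using hi)
  rw [List.getD_cons_succ] at this
  push_cast at this
  omega

lemma one_le_B : ∀ {k : ℕ} {x : ℤ} {xs : List ℤ}, IsKBinomSeq k (x :: xs) → 1 ≤ B (x :: xs) k
  | _, _, [], h => by
    rw [B, B, add_zero]
    exact one_le_C (by positivity) h.le_head
  | _, _, _ :: _, h => by
    have := one_le_B h.tail
    rw [Nat.cast_pred h.one_le] at this
    have := one_le_C (by positivity) h.le_head
    rw [B]
    omega

lemma isCascade {n : ℕ} : ∀ {k : ℕ} {x : ℤ} {xs : List ℤ}, IsKBinomSeq k (x :: xs) → x ≤ n →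
    (xs ≠ [] → x < n) → IsCascade n (x :: xs) k
  | _, _, [], h, hxn, _ => ⟨by positivity, h.le_head, hxn⟩
  | _, _, _ :: _, h, _, hxn => by
    have hyx := (List.isChain_cons_cons.1 h.1).1
    have hx := hxn (List.cons_ne_nil _ _)
    refine ⟨hyx, hx, ?_⟩
    rw [← Nat.cast_pred h.one_le]
    exact isCascade h.tail (by omega) fun _ ↦ by omega

lemma isCascade_of_B_le_choose {n : ℕ} (h : IsKBinomSeq k (x :: xs))
    (hB : B (x :: xs) k ≤ n.choose k) : IsCascade n (x :: xs) k := by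
  have hk := h.one_le
  have hkx := h.le_head
  have hsplit : B (x :: xs) k = x.toNat.choose k + B xs (k - 1) := by
    rw [B, C_eq_choose_s19 (by omega) (by positivity), Int.toNat_natCast]
  have hrest : xs ≠ [] → 1 ≤ B xs (k - 1) := by
    rcases xs with _ | ⟨y, ys⟩
    · exact fun hne ↦ absurd rfl hne
    · intro _
      have := one_le_B h.tail
      rwa [Nat.cast_pred hk] at this
  have hrest₀ : 0 ≤ B xs (k - 1) := by
    rcases eq_or_ne xs [] with rfl | hne
    · rfl
    · exact zero_le_one.trans (hrest hne)
  refine h.isCascade ?_ fun hne ↦ ?_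
  · by_contra! hnx
    have := Nat.choose_lt_choose_of_lt hk (by omega) (show n < x.toNat by omega)
    omega
  · by_contra! hnx
    have := Nat.choose_le_choose k (show n ≤ x.toNat by omega)
    have := hrest hne
    omega

end IsKBinomSeq

theorem colexInit_is_extremal_general
    (n k : ℕ)
    (m : ℕ) (hmn : m ≤ n.choose k)
    (a : List ℤ) (ha : IsKBinom k (m : ℤ) a) :
    ((Finset.shadow (colexInit n k m)).card : ℤ) = B a ((k : ℤ) - 1) := by
  obtain ⟨hseq, hm⟩ := ha
  rcases a with _ | ⟨x, xs⟩
  · rw [B] at hm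
    rw [show m = 0 by omega, colexInit_zero, shadow_empty, card_empty, B, Nat.cast_zero]
  have hcasc : IsCascade n (x :: xs) k := hseq.isCascade_of_B_le_choose (by omega)
  have hcasc' := hcasc.sub_one (by exact_mod_cast hseq.2.1)
  have hcard : #(cascadeSet n (x :: xs) k) = k := by
    have := hcasc.card
    omega
  have hinit : colexInit n k m = initSeg (cascadeSet n (x :: xs) k) := by
    have := hcasc.card_initSeg
    rw [← colexInit_eq_initSeg (m := m) (by omega), hcard]
  have hne : (cascadeSet n (x :: xs) k).Nonempty := by
    have := hseq.one_le
    exact card_pos.1 (by omega)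
  rw [hinit, shadow_initSeg hne, hcasc.erase_min' hcasc' hne, hcasc'.card_initSeg]

/-- The colex initial segment is extremal: `|Δ(I_{n,k}(m))| = B(a, k-1)`. -/
theorem colexInit_is_extremal
    (n k : ℕ) (hk : 1 ≤ k) (hkn : k ≤ n)
    (m : ℕ) (hm : 0 < m) (hmn : m ≤ n.choose k)
    (a : List ℤ) (ha : IsKBinom k (m : ℤ) a) :
    ((Finset.shadow (colexInit n k m)).card : ℤ) = B a ((k : ℤ) - 1) :=
  colexInit_is_extremal_general n k m hmn a ha
end
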